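/- Let E = EuclideanSpace ℝ (Fin n), ξ ∈ E with ‖ξ‖ = 1, and μ a Borel probability measure on E satisfying the standing integrability assumption whose topological support is not contained in any affine line {p + tξ : t ∈ ℝ} (p ∈ E). Let (β_m) be a sequence in [0, 1) converging to 1 and, for each m, let q_m ∈ E be a minimizer of G_{β_m ξ}. Then ∫ ‖ (q_m − x)/‖q_m − x‖ − ξ ‖² dμ(x) → 0 as m → ∞, where (q_m − x)/‖q_m − x‖ is interpreted as 0 when x = q_m. (Euclidean case of Theorem 6.1(c): extreme quantiles lie asymptotically in direction ξ from the data, in mean square.) -/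

import Mathlib

open MeasureTheory Filter Topology

/-- The data-based geometric quantile loss in Euclidean space:
`ρ_u(x,p) = ‖p − x‖ − ⟪u, p − x⟫`. -/
noncomputable def quantileLoss {n : ℕ} (u x p : EuclideanSpace ℝ (Fin n)) : ℝ :=
  ‖p - x‖ - inner ℝ u (p - x)

/-- The topological support of a measure: points all of whose neighbourhoods have
positive measure. -/
def measSupport {α : Type*} [TopologicalSpace α] [MeasurableSpace α]
    (μ : Measure α) : Set α :=
  {x | ∀ U ∈ nhds x, μ U ≠ 0}

/-!
At a minimiser `q` of `G_{βξ}`, the first-order condition in direction `ξ` reads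
`β ≤ ∫ D(q - x; ξ) dμ(x)`, where `D(v; w) = normRightDeriv v w` is the right derivative of
`t ↦ ‖v + t • w‖` at `0` (differentiate under the integral by dominated convergence). Off the
atom `x = q` one has `‖(q - x)/‖q - x‖ - ξ‖² = 2 (1 - D(q - x; ξ))`, so the mean square
distance is at most `2 (1 - β) + μ{q}`. The atom term vanishes in the limit: at every point
`y`, `∫ D(y - x; ξ) dμ(x) < 1`, because equality would put `μ` on the line through `y` in
direction `ξ`; so as `β_m → 1`, `q_m` eventually avoids each of the finitely many atoms of
mass `≥ ε`.
-/

lemma measSupport_subset_of_ae_mem {α : Type*} [TopologicalSpace α] [MeasurableSpace α]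
    {μ : Measure α} {s : Set α} (hs : IsClosed s) (h : ∀ᵐ x ∂μ, x ∈ s) :
    measSupport μ ⊆ s := fun x hx => by
  by_contra hxs
  exact hx sᶜ (hs.isOpen_compl.mem_nhds hxs) (ae_iff.1 h)

lemma isClosed_setOf_exists_eq_add_smul {E : Type*} [NormedAddCommGroup E] [NormedSpace ℝ E]
    (p ξ : E) : IsClosed {y | ∃ t : ℝ, y = p + t • ξ} := by
  have h : {y | ∃ t : ℝ, y = p + t • ξ} = (· - p) ⁻¹' (ℝ ∙ ξ : Set E) := by
    ext y
    simp only [Set.mem_ofPred_eq, Set.mem_preimage, SetLike.mem_coe,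
      Submodule.mem_span_singleton, eq_sub_iff_add_eq', eq_comm]
  rw [h]
  exact (Submodule.closed_of_finiteDimensional _).preimage (continuous_id.sub continuous_const)

section NormRightDeriv

variable {E : Type*} [NormedAddCommGroup E] [InnerProductSpace ℝ E]

open Classical in
noncomputable def normRightDeriv (v w : E) : ℝ :=
  if v = 0 then ‖w‖ else inner ℝ (‖v‖⁻¹ • v) w

lemma norm_inv_norm_smul_self {v : E} (hv : v ≠ 0) : ‖‖v‖⁻¹ • v‖ = 1 := by
  rw [norm_smul, norm_inv, norm_norm, inv_mul_cancel₀ (norm_ne_zero_iff.2 hv)]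

lemma tendsto_slope_norm_add_smul (v w : E) :
    Tendsto (fun t : ℝ => t⁻¹ * (‖v + t • w‖ - ‖v‖)) (𝓝[>] 0) (𝓝 (normRightDeriv v w)) := by
  by_cases hv : v = 0
  · subst hv
    refine tendsto_const_nhds.congr' (eventually_nhdsWithin_of_forall fun t (ht : 0 < t) => ?_)
    simp [normRightDeriv, norm_smul, abs_of_pos ht, ht.ne']
  · -- differentiate `‖v + t • w‖ = √(‖v + t • w‖ ^ 2)`, legitimate since `v ≠ 0`
    have hderiv : HasDerivAt (fun t : ℝ => ‖v + t • w‖) (inner ℝ (‖v‖⁻¹ • v) w) 0 := by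
      have h := (((hasDerivAt_id (0:ℝ)).smul_const w).const_add v).norm_sq.sqrt
        (by simpa using hv)
      simp only [id, zero_smul, add_zero, one_smul, Real.sqrt_sq (norm_nonneg _)] at h
      convert h using 1
      rw [real_inner_smul_left]
      field_simp
    simpa [normRightDeriv, hv] using hderiv.tendsto_slope_zero_right

lemma abs_slope_norm_add_smul_le (v w : E) (t : ℝ) :
    |t⁻¹ * (‖v + t • w‖ - ‖v‖)| ≤ ‖w‖ := by
  rcases eq_or_ne t 0 with rfl | ht
  · simp
  have h := abs_norm_sub_norm_le (v + t • w) v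
  rw [add_sub_cancel_left, norm_smul, Real.norm_eq_abs] at h
  rw [abs_mul, abs_inv, inv_mul_le_iff₀ (abs_pos.2 ht)]
  exact h

lemma abs_normRightDeriv_le (v w : E) : |normRightDeriv v w| ≤ ‖w‖ :=
  le_of_tendsto (tendsto_slope_norm_add_smul v w).abs
    (Eventually.of_forall fun t => abs_slope_norm_add_smul_le v w t)

lemma eq_norm_smul_of_normRightDeriv_eq_one {v ξ : E} (hξ : ‖ξ‖ = 1)
    (h : normRightDeriv v ξ = 1) : v = ‖v‖ • ξ := by
  by_cases hv : v = 0
  · simp [hv]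
  rw [normRightDeriv, if_neg hv,
    inner_eq_one_iff_of_norm_eq_one (norm_inv_norm_smul_self hv) hξ] at h
  rw [← h, smul_smul, mul_inv_cancel₀ (norm_ne_zero_iff.2 hv), one_smul]

lemma norm_inv_norm_smul_sub_sq {ξ : E} (hξ : ‖ξ‖ = 1) (q x : E) :
    ‖‖q - x‖⁻¹ • (q - x) - ξ‖ ^ 2
      = 2 * (1 - normRightDeriv (q - x) ξ) + ({q} : Set E).indicator 1 x := by
  by_cases hx : x = q
  · simp [hx, normRightDeriv, hξ]
  have hv : q - x ≠ 0 := sub_ne_zero.2 (Ne.symm hx)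
  rw [norm_sub_sq_real, norm_inv_norm_smul_self hv, hξ, normRightDeriv, if_neg hv,
    Set.indicator_of_notMem (Set.notMem_singleton_iff.2 hx)]
  ring

variable [MeasurableSpace E] [BorelSpace E] {μ : Measure E}

lemma measurable_normRightDeriv (w : E) : Measurable fun v : E => normRightDeriv v w := by
  refine measurable_of_continuousOn_compl_singleton 0 fun v (hv : v ≠ 0) => ?_
  refine (ContinuousAt.congr (f := fun v : E => ‖v‖⁻¹ * inner ℝ v w) ?_ ?_).continuousWithinAt
  · exact ((continuous_norm.continuousAt).inv₀ (norm_ne_zero_iff.2 hv)).mul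
      (continuous_id.inner continuous_const).continuousAt
  · filter_upwards [isOpen_ne.mem_nhds hv] with u hu
    simp [normRightDeriv, hu, real_inner_smul_left]

lemma integrable_normRightDeriv [IsFiniteMeasure μ] (q w : E) :
    Integrable (fun x => normRightDeriv (q - x) w) μ :=
  Integrable.of_bound
    ((measurable_normRightDeriv w).comp
      (continuous_const.sub continuous_id).measurable).aestronglyMeasurable
    ‖w‖ (ae_of_all _ fun _ => abs_normRightDeriv_le _ _)

lemma integral_norm_inv_norm_smul_sub_sq [IsProbabilityMeasure μ] {ξ : E}
    (hξ : ‖ξ‖ = 1) (q : E) :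
    ∫ x, ‖‖q - x‖⁻¹ • (q - x) - ξ‖ ^ 2 ∂μ
      = 2 * (1 - ∫ x, normRightDeriv (q - x) ξ ∂μ) + μ.real {q} := by
  simp_rw [norm_inv_norm_smul_sub_sq hξ q]
  have hD := integrable_normRightDeriv (μ := μ) q ξ
  have h1 : Integrable (fun x => 2 * (1 - normRightDeriv (q - x) ξ)) μ :=
    ((integrable_const 1).sub hD).const_mul 2
  have h2 : Integrable (({q} : Set E).indicator (1 : E → ℝ)) μ :=
    (integrable_const 1).indicator (measurableSet_singleton q)
  rw [integral_add h1 h2, integral_const_mul, integral_sub (integrable_const 1) hD,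
    integral_indicator_one (measurableSet_singleton q)]
  simp

lemma integral_normRightDeriv_lt_one [IsProbabilityMeasure μ] {ξ : E}
    (hξ : ‖ξ‖ = 1) (hsupp : ¬ ∃ p : E, measSupport μ ⊆ {y | ∃ t : ℝ, y = p + t • ξ}) (q : E) :
    ∫ x, normRightDeriv (q - x) ξ ∂μ < 1 := by
  by_contra! hge
  have hD := integrable_normRightDeriv (μ := μ) q ξ
  have hgap_nonneg : 0 ≤ fun x => 1 - normRightDeriv (q - x) ξ := fun x =>
    sub_nonneg.2 (hξ ▸ (le_abs_self _).trans (abs_normRightDeriv_le _ _))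
  have hgap_zero : ∫ x, (1 - normRightDeriv (q - x) ξ) ∂μ = 0 := by
    refine le_antisymm ?_ (integral_nonneg hgap_nonneg)
    rw [integral_sub (integrable_const 1) hD, integral_const]
    simp only [probReal_univ, smul_eq_mul, one_mul]
    linarith
  have hae :=
    (integral_eq_zero_iff_of_nonneg hgap_nonneg ((integrable_const 1).sub hD)).1 hgap_zero
  refine hsupp ⟨q, measSupport_subset_of_ae_mem (isClosed_setOf_exists_eq_add_smul q ξ) ?_⟩
  filter_upwards [hae] with x hx
  have hdir := eq_norm_smul_of_normRightDeriv_eq_one hξ (sub_eq_zero.1 hx).symm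
  exact ⟨-‖q - x‖, by rw [neg_smul, ← hdir]; abel⟩

end NormRightDeriv

lemma finite_setOf_le_measureReal_singleton {α : Type*} [MeasurableSpace α]
    [MeasurableSingletonClass α] (μ : Measure α) [IsFiniteMeasure μ] {ε : ℝ} (hε : 0 < ε) :
    {y | ε ≤ μ.real {y}}.Finite :=
  (Measure.finite_const_le_meas_of_disjoint_iUnion μ (ENNReal.ofReal_pos.2 hε)
    measurableSet_singleton (fun _ _ h => Set.disjoint_singleton.2 h) (measure_ne_top μ _)).subset
    fun _ hy => ENNReal.ofReal_le_of_le_toReal hy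

lemma tendsto_measureReal_singleton_zero_of_forall_lt {α ι : Type*} [MeasurableSpace α]
    [MeasurableSingletonClass α] (μ : Measure α) [IsFiniteMeasure μ] {l : Filter ι}
    {F : α → ℝ} {c : ℝ} (hF : ∀ y, F y < c) {β : ι → ℝ} (hβ : Tendsto β l (𝓝 c))
    {q : ι → α} (hq : ∀ i, β i ≤ F (q i)) :
    Tendsto (fun i => μ.real {q i}) l (𝓝 0) := by
  refine tendsto_order.2
    ⟨fun a ha => Eventually.of_forall fun i => ha.trans_le measureReal_nonneg, fun ε hε => ?_⟩
  have hheavy := finite_setOf_le_measureReal_singleton μ hε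
  filter_upwards [(eventually_all_finite hheavy).2 fun y _ =>
    hβ.eventually (eventually_gt_nhds (hF y))] with i hi
  by_contra! hqi
  exact (hi (q i) hqi).not_ge (hq i)

section QuantileLoss

variable {n : ℕ} {μ : Measure (EuclideanSpace ℝ (Fin n))}

lemma one_sub_norm_mul_le_quantileLoss (u x p : EuclideanSpace ℝ (Fin n)) :
    (1 - ‖u‖) * ‖p - x‖ ≤ quantileLoss u x p := by
  have := real_inner_le_norm u (p - x)
  rw [quantileLoss]
  linarith

lemma integrable_id_of_integrable_quantileLoss [IsFiniteMeasure μ]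
    {u p : EuclideanSpace ℝ (Fin n)} (hu : ‖u‖ < 1)
    (h : Integrable (fun x => quantileLoss u x p) μ) : Integrable (fun x => x) μ := by
  have hsub : Integrable (fun x => p - x) μ := by
    refine (integrable_norm_iff (continuous_const.sub continuous_id).aestronglyMeasurable).1 ?_
    refine (h.const_mul (1 - ‖u‖)⁻¹).mono' (by fun_prop) (ae_of_all _ fun x => ?_)
    rw [norm_norm, le_inv_mul_iff₀ (sub_pos.2 hu)]
    exact one_sub_norm_mul_le_quantileLoss u x p
  refine ((integrable_const p).sub hsub).congr (ae_of_all _ fun x => ?_)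
  simp

lemma integrable_quantileLoss [IsFiniteMeasure μ] (hμ : Integrable (fun x => x) μ)
    (u p : EuclideanSpace ℝ (Fin n)) : Integrable (fun x => quantileLoss u x p) μ :=
  ((integrable_const p).sub hμ).norm.sub (((integrable_const p).sub hμ).const_inner u)

lemma norm_sub_add_smul_sub_norm_sub (u x p w : EuclideanSpace ℝ (Fin n)) (t : ℝ) :
    ‖p - x + t • w‖ - ‖p - x‖
      = quantileLoss u x (p + t • w) - quantileLoss u x p + t * inner ℝ u w := by
  rw [quantileLoss, quantileLoss, add_sub_right_comm, inner_add_right, real_inner_smul_right]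
  ring

lemma inner_le_integral_normRightDeriv_of_forall_le [IsProbabilityMeasure μ]
    (hμ : Integrable (fun x => x) μ) {u q : EuclideanSpace ℝ (Fin n)}
    (hq : ∀ p, ∫ x, quantileLoss u x q ∂μ ≤ ∫ x, quantileLoss u x p ∂μ)
    (w : EuclideanSpace ℝ (Fin n)) :
    inner ℝ u w ≤ ∫ x, normRightDeriv (q - x) w ∂μ := by
  have hslope : ∀ t > 0, inner ℝ u w ≤ ∫ x, t⁻¹ * (‖q - x + t • w‖ - ‖q - x‖) ∂μ := by
    intro t ht
    have hmove := integrable_quantileLoss hμ u (q + t • w)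
    have hstay := integrable_quantileLoss hμ u q
    have hdiff : Integrable (fun x => quantileLoss u x (q + t • w) - quantileLoss u x q) μ :=
      hmove.sub hstay
    simp_rw [integral_const_mul, norm_sub_add_smul_sub_norm_sub u _ q w t]
    rw [integral_add hdiff (integrable_const _), integral_sub hmove hstay,
      integral_const, le_inv_mul_iff₀ ht]
    simp only [probReal_univ, smul_eq_mul, one_mul]
    linarith [hq (q + t • w)]
  have hlim : Tendsto (fun t : ℝ => ∫ x, t⁻¹ * (‖q - x + t • w‖ - ‖q - x‖) ∂μ) (𝓝[>] 0)
      (𝓝 (∫ x, normRightDeriv (q - x) w ∂μ)) :=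
    tendsto_integral_filter_of_dominated_convergence (fun _ => ‖w‖)
      (Eventually.of_forall fun t => by fun_prop)
      (Eventually.of_forall fun t => ae_of_all _ fun x => abs_slope_norm_add_smul_le _ _ _)
      (integrable_const _) (ae_of_all _ fun x => tendsto_slope_norm_add_smul _ _)
  exact ge_of_tendsto hlim (eventually_nhdsWithin_of_forall hslope)

end QuantileLoss

theorem extreme_quantiles_direction_L2_general
    {n : ℕ} (μ : Measure (EuclideanSpace ℝ (Fin n))) [IsProbabilityMeasure μ]
    (hμint : ∃ (u₀ p₀ : EuclideanSpace ℝ (Fin n)), ‖u₀‖ < 1 ∧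
      Integrable (fun x => quantileLoss u₀ x p₀) μ)
    (ξ : EuclideanSpace ℝ (Fin n)) (hξ : ‖ξ‖ = 1)
    (hsupp : ¬ ∃ p : EuclideanSpace ℝ (Fin n),
      measSupport μ ⊆ {y | ∃ t : ℝ, y = p + t • ξ})
    (β : ℕ → ℝ)
    (hβlim : Tendsto β atTop (nhds 1))
    (q : ℕ → EuclideanSpace ℝ (Fin n))
    (hq : ∀ m, ∀ p, ∫ x, quantileLoss (β m • ξ) x (q m) ∂μ
        ≤ ∫ x, quantileLoss (β m • ξ) x p ∂μ) :
    Tendsto (fun m => ∫ x, ‖‖q m - x‖⁻¹ • (q m - x) - ξ‖ ^ 2 ∂μ) atTop (nhds 0) := by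
  obtain ⟨u₀, p₀, hu₀, hint⟩ := hμint
  have hμ := integrable_id_of_integrable_quantileLoss hu₀ hint
  have hfirst : ∀ m, β m ≤ ∫ x, normRightDeriv (q m - x) ξ ∂μ := fun m => by
    simpa [real_inner_smul_left, hξ] using
      inner_le_integral_normRightDeriv_of_forall_le hμ (hq m) ξ
  have hatoms : Tendsto (fun m => μ.real {q m}) atTop (𝓝 0) :=
    tendsto_measureReal_singleton_zero_of_forall_lt μ (integral_normRightDeriv_lt_one hξ hsupp)
      hβlim hfirst
  have hbound : ∀ m, ∫ x, ‖‖q m - x‖⁻¹ • (q m - x) - ξ‖ ^ 2 ∂μ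
      ≤ 2 * (1 - β m) + μ.real {q m} := fun m => by
    rw [integral_norm_inv_norm_smul_sub_sq hξ]
    linarith [hfirst m]
  have hlim : Tendsto (fun m => 2 * (1 - β m) + μ.real {q m}) atTop (𝓝 0) := by
    simpa using (((tendsto_const_nhds (x := (1 : ℝ))).sub hβlim).const_mul 2).add hatoms
  exact tendsto_of_tendsto_of_tendsto_of_le_of_le tendsto_const_nhds hlim
    (fun m => integral_nonneg fun x => by positivity) hbound

/-- Euclidean case of Theorem 6.1(c): along any sequence `β_m → 1⁻`, the unit vector
from a data point `x` towards the `(β_m ξ)`-quantile `q_m` converges to `ξ` in mean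
square.  (Here `(q_m − x)/‖q_m − x‖` is interpreted as `0` when `x = q_m`, which is the
convention built into `‖q_m − x‖⁻¹ • (q_m − x)`.) -/
theorem extreme_quantiles_direction_L2
    {n : ℕ} (μ : Measure (EuclideanSpace ℝ (Fin n))) [IsProbabilityMeasure μ]
    (hμint : ∃ (u₀ p₀ : EuclideanSpace ℝ (Fin n)), ‖u₀‖ < 1 ∧
      Integrable (fun x => quantileLoss u₀ x p₀) μ)
    (ξ : EuclideanSpace ℝ (Fin n)) (hξ : ‖ξ‖ = 1)
    (hsupp : ¬ ∃ p : EuclideanSpace ℝ (Fin n),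
      measSupport μ ⊆ {y | ∃ t : ℝ, y = p + t • ξ})
    (β : ℕ → ℝ) (hβ : ∀ m, β m ∈ Set.Ico (0 : ℝ) 1)
    (hβlim : Tendsto β atTop (nhds 1))
    (q : ℕ → EuclideanSpace ℝ (Fin n))
    (hq : ∀ m, ∀ p, ∫ x, quantileLoss (β m • ξ) x (q m) ∂μ
        ≤ ∫ x, quantileLoss (β m • ξ) x p ∂μ) :
    Tendsto (fun m => ∫ x, ‖‖q m - x‖⁻¹ • (q m - x) - ξ‖ ^ 2 ∂μ) atTop (nhds 0) :=
  extreme_quantiles_direction_L2_general μ hμint ξ hξ hsupp β hβlim q hq
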